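/- arXiv:1807.11767 — 4 statements merged into one kernel-verified Lean document; each statement's English description precedes it below -/
import Mathlib

section
/- Let (X,d) be a metric space, f : X → X nonexpansive, and (x_n)_{n∈ℤ}, (y_n)_{n∈ℤ} backward orbits of f such that (y_n) has bounded step, i.e. there is σ ≥ 0 with d(y_n, y_{n+1}) ≤ σ for all n. Suppose there exist a constant C > 0, an integer α, and a strictly increasing sequence of integers n_k → ∞ such that d(x_{n_k}, y_{n_k + α}) < C for all k. Then d(x_n, y_n) ≤ C + |α|·σ for all n ∈ ℤ. -/
open Filter

theorem backward_orbits_shifted_close_implies_close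
    {X : Type*} [MetricSpace X] (f : X → X)
    (hf : ∀ a b : X, dist (f a) (f b) ≤ dist a b)
    (x y : ℤ → X)
    (hx : ∀ n : ℤ, f (x (n + 1)) = x n)
    (hy : ∀ n : ℤ, f (y (n + 1)) = y n)
    (σ : ℝ) (hσ : 0 ≤ σ)
    (hstep : ∀ n : ℤ, dist (y n) (y (n + 1)) ≤ σ)
    (C : ℝ) (hC : 0 < C) (α : ℤ) (nk : ℕ → ℤ)
    (hmono : StrictMono nk) (htend : Tendsto nk atTop atTop)
    (hclose : ∀ k : ℕ, dist (x (nk k)) (y (nk k + α)) < C) :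
    ∀ n : ℤ, dist (x n) (y n) ≤ C + |(α : ℝ)| * σ := by
  -- distance between the two orbits is nonincreasing as index decreases
  have key : ∀ (m : ℕ) (n : ℤ), dist (x n) (y n) ≤ dist (x (n + m)) (y (n + m)) := by
    intro m
    induction m with
    | zero => intro n; simp
    | succ m ih =>
      intro n
      have h1 : dist (x n) (y n) ≤ dist (x (n + 1)) (y (n + 1)) := by
        rw [← hx n, ← hy n]; exact hf _ _
      calc dist (x n) (y n) ≤ dist (x (n + 1)) (y (n + 1)) := h1
        _ ≤ dist (x (n + 1 + m)) (y (n + 1 + m)) := ih (n + 1)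
        _ = dist (x (n + (m + 1 : ℕ))) (y (n + (m + 1 : ℕ))) := by
            push_cast; ring_nf
  -- steps of y
  have step : ∀ (m : ℕ) (n : ℤ), dist (y n) (y (n + m)) ≤ m * σ := by
    intro m
    induction m with
    | zero => intro n; simp
    | succ m ih =>
      intro n
      calc dist (y n) (y (n + (m + 1 : ℕ))) ≤ dist (y n) (y (n + m)) + dist (y (n + m)) (y (n + (m + 1 : ℕ))) := dist_triangle _ _ _
        _ ≤ m * σ + σ := by
            gcongr
            · exact ih n
            · have := hstep (n + m)
              have e : n + (m : ℤ) + 1 = n + ((m : ℕ) + 1 : ℕ) := by push_cast; ring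
              rwa [e] at this
        _ = ((m : ℕ) + 1 : ℕ) * σ := by push_cast; ring
  have stepZ : ∀ n : ℤ, dist (y n) (y (n + α)) ≤ |(α : ℝ)| * σ := by
    intro n
    rcases le_or_gt 0 α with h | h
    · obtain ⟨m, rfl⟩ := Int.eq_ofNat_of_zero_le h
      have := step m n
      simpa [abs_of_nonneg (by positivity : (0:ℝ) ≤ (m:ℝ))] using this
    · obtain ⟨m, hm⟩ := Int.eq_ofNat_of_zero_le (by omega : (0:ℤ) ≤ -α)
      have := step m (n + α)
      have e : n + α + (m : ℤ) = n := by omega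
      rw [e, dist_comm] at this
      have habs : |(α : ℝ)| = (m : ℝ) := by
        have : (α : ℝ) = -(m : ℝ) := by
          have : α = -(m:ℤ) := by omega
          rw [this]; push_cast; ring
        rw [this, abs_neg, abs_of_nonneg (by positivity)]
      rw [habs]; exact this
  -- at the subsequence points
  have hk : ∀ k : ℕ, dist (x (nk k)) (y (nk k)) ≤ C + |(α : ℝ)| * σ := by
    intro k
    calc dist (x (nk k)) (y (nk k))
        ≤ dist (x (nk k)) (y (nk k + α)) + dist (y (nk k + α)) (y (nk k)) := dist_triangle _ _ _
      _ ≤ C + |(α : ℝ)| * σ := by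
          have h1 := (hclose k).le
          have h2 := stepZ (nk k)
          rw [dist_comm] at h2
          linarith
  intro n
  obtain ⟨k, hkn⟩ := (htend.eventually_ge_atTop n).exists
  obtain ⟨m, hm⟩ := Int.eq_ofNat_of_zero_le (by omega : (0:ℤ) ≤ nk k - n)
  have e : nk k = n + (m : ℤ) := by omega
  calc dist (x n) (y n) ≤ dist (x (n + m)) (y (n + m)) := key m n
    _ = dist (x (nk k)) (y (nk k)) := by rw [e]
    _ ≤ C + |(α : ℝ)| * σ := hk k
end

section
/- Let (X,d) be a metric space, f : X → X nonexpansive, and (x_n)_{n∈ℤ}, (y_n)_{n∈ℤ} two backward orbits of f with bounded step. If sup_{n∈ℤ} d(x_n, y_n) < ∞ then sup_{n∈ℤ} inf_{m∈ℤ} d(x_n, y_m) < ∞, and conversely, if there exist C > 0, N > 0, M > 0 such that inf_{m∈ℤ} d(x_n, y_m) < C for all n, d(x_N, y_m) ≥ 2C for all m < 0 and for all m > M, then there is a constant C' such that d(x_n, y_n) ≤ C' for all n ∈ ℤ. -/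
open scoped ENNReal

theorem backward_orbits_bounded_dist_iff_bounded_inf_dist
    {X : Type*} [MetricSpace X] (f : X → X)
    (hf : ∀ a b : X, dist (f a) (f b) ≤ dist a b)
    (x y : ℤ → X)
    (hx : ∀ n : ℤ, f (x (n + 1)) = x n)
    (hy : ∀ n : ℤ, f (y (n + 1)) = y n)
    (hxstep : ∃ σ : ℝ, ∀ n : ℤ, dist (x n) (x (n + 1)) ≤ σ)
    (hystep : ∃ σ : ℝ, ∀ n : ℤ, dist (y n) (y (n + 1)) ≤ σ) :
    ((⨆ n : ℤ, edist (x n) (y n)) < ⊤ → (⨆ n : ℤ, ⨅ m : ℤ, edist (x n) (y m)) < ⊤) ∧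
      (∀ (C : ℝ) (N M : ℤ), 0 < C → 0 < N → 0 < M →
        (∀ n : ℤ, (⨅ m : ℤ, edist (x n) (y m)) < ENNReal.ofReal C) →
        (∀ m : ℤ, m < 0 → 2 * C ≤ dist (x N) (y m)) →
        (∀ m : ℤ, M < m → 2 * C ≤ dist (x N) (y m)) →
        ∃ C' : ℝ, ∀ n : ℤ, dist (x n) (y n) ≤ C') := by
  obtain ⟨σ, hσ⟩ := hystep
  have hσ0 : 0 ≤ σ := le_trans dist_nonneg (hσ 0)
  -- applying f^k shifts indices down and contracts distances
  have hA : ∀ k : ℕ, ∀ n m : ℤ, dist (x (n - k)) (y (m - k)) ≤ dist (x n) (y m) := by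
    intro k
    induction k with
    | zero => intro n m; simp
    | succ k ih =>
      intro n m
      have h1 : dist (x (n - 1)) (y (m - 1)) ≤ dist (x n) (y m) := by
        have hx' : x (n - 1) = f (x n) := by
          have := hx (n - 1); rw [show (n - 1) + 1 = n by ring] at this; exact this.symm
        have hy' : y (m - 1) = f (y m) := by
          have := hy (m - 1); rw [show (m - 1) + 1 = m by ring] at this; exact this.symm
        rw [hx', hy']; exact hf _ _
      have e1 : n - ((k : ℤ) + 1) = (n - 1) - (k : ℤ) := by ring
      have e2 : m - ((k : ℤ) + 1) = (m - 1) - (k : ℤ) := by ring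
      calc dist (x (n - ((k + 1 : ℕ) : ℤ))) (y (m - ((k + 1 : ℕ) : ℤ)))
          = dist (x ((n - 1) - (k : ℤ))) (y ((m - 1) - (k : ℤ))) := by
            push_cast; rw [e1, e2]
        _ ≤ dist (x (n - 1)) (y (m - 1)) := ih _ _
        _ ≤ dist (x n) (y m) := h1
  have hBnat : ∀ k : ℕ, ∀ a : ℤ, dist (y a) (y (a + k)) ≤ k * σ := by
    intro k
    induction k with
    | zero => intro a; simp
    | succ k ih =>
      intro a
      have e : a + ((k + 1 : ℕ) : ℤ) = (a + k) + 1 := by push_cast; ring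
      calc dist (y a) (y (a + ((k + 1 : ℕ) : ℤ)))
          ≤ dist (y a) (y (a + k)) + dist (y (a + k)) (y (a + ((k + 1 : ℕ) : ℤ))) :=
            dist_triangle _ _ _
        _ ≤ k * σ + σ := by
            refine add_le_add (ih a) ?_
            rw [e]; exact hσ (a + k)
        _ = ((k + 1 : ℕ) : ℝ) * σ := by push_cast; ring
  have hB : ∀ (K : ℕ) (a b : ℤ), (b - a).natAbs ≤ K → dist (y a) (y b) ≤ K * σ := by
    intro K a b hab
    rcases le_total a b with h | h
    · have hb : b = a + ((b - a).toNat : ℤ) := by omega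
      rw [hb]
      calc dist (y a) (y (a + ((b - a).toNat : ℤ))) ≤ ((b - a).toNat : ℝ) * σ := hBnat _ _
        _ ≤ (K : ℝ) * σ := by
            apply mul_le_mul_of_nonneg_right _ hσ0
            exact_mod_cast show (b - a).toNat ≤ K by omega
    · have hb : a = b + ((a - b).toNat : ℤ) := by omega
      rw [dist_comm, hb]
      calc dist (y b) (y (b + ((a - b).toNat : ℤ))) ≤ ((a - b).toNat : ℝ) * σ := hBnat _ _
        _ ≤ (K : ℝ) * σ := by
            apply mul_le_mul_of_nonneg_right _ hσ0
            exact_mod_cast show (a - b).toNat ≤ K by omega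
  constructor
  · intro h
    refine lt_of_le_of_lt ?_ h
    exact iSup_mono fun n => iInf_le _ n
  · intro C N M hC hN hM hinf hneg hpos
    refine ⟨C + (((N + M).toNat : ℕ) : ℝ) * σ, ?_⟩
    have key : ∀ n : ℤ, N ≤ n → dist (x n) (y n) ≤ C + (((N + M).toNat : ℕ) : ℝ) * σ := by
      intro n hn
      obtain ⟨m, hm⟩ := iInf_lt_iff.mp (hinf n)
      have hdm : dist (x n) (y m) < C := edist_lt_ofReal.mp hm
      set k : ℕ := (n - N).toNat with hk
      have hAk := hA k n m
      have hnk : n - (k : ℤ) = N := by omega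
      rw [hnk] at hAk
      have hm'0 : 0 ≤ m - (k : ℤ) := by
        by_contra hcon
        have := hneg (m - (k : ℤ)) (by omega)
        linarith [lt_of_le_of_lt hAk hdm]
      have hm'M : m - (k : ℤ) ≤ M := by
        by_contra hcon
        have := hpos (m - (k : ℤ)) (by omega)
        linarith [lt_of_le_of_lt hAk hdm]
      have hnab : (n - m).natAbs ≤ (N + M).toNat := by omega
      have hym : dist (y m) (y n) ≤ (((N + M).toNat : ℕ) : ℝ) * σ := hB _ m n hnab
      calc dist (x n) (y n) ≤ dist (x n) (y m) + dist (y m) (y n) := dist_triangle _ _ _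
        _ ≤ C + (((N + M).toNat : ℕ) : ℝ) * σ := add_le_add hdm.le hym
    intro n
    rcases le_total N n with h | h
    · exact key n h
    · have hmono := hA (N - n).toNat N N
      rw [show N - (((N - n).toNat : ℕ) : ℤ) = n by omega] at hmono
      exact le_trans hmono (key N le_rfl)
end

section
/- Let (X,d) be a metric space, let γ : [0,∞) → X be a geodesic ray parametrized by arclength starting at γ(0), and let (y_n)_{n∈ℕ} be a sequence in X with d(y_n, y_{n+1}) ≤ σ for all n. Suppose there exist C > 0 and a sequence of parameters 0 = t_0 ≤ t_1 ≤ t_2 ≤ … with t_n → ∞ such that d(γ(t_n), y_n) ≤ C for all n. Then for every t ≥ 0 one has inf_{n∈ℕ} d(γ(t), y_n) ≤ 3C + σ. -/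
open Filter

theorem geodesic_points_close_to_orbit
    {X : Type*} [MetricSpace X] (γ : ℝ → X)
    (hγ : ∀ s t : ℝ, 0 ≤ s → 0 ≤ t → dist (γ s) (γ t) = |s - t|)
    (y : ℕ → X) (σ : ℝ)
    (hstep : ∀ n : ℕ, dist (y n) (y (n + 1)) ≤ σ)
    (C : ℝ) (hC : 0 < C)
    (t : ℕ → ℝ) (ht0 : t 0 = 0) (htmono : Monotone t) (htnonneg : ∀ n, 0 ≤ t n)
    (htend : Tendsto t atTop atTop)
    (hclose : ∀ n : ℕ, dist (γ (t n)) (y n) ≤ C) :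
    ∀ s : ℝ, 0 ≤ s → (⨅ n : ℕ, dist (γ s) (y n)) ≤ 3 * C + σ := by
  intro s hs
  classical
  have hσ : 0 ≤ σ := le_trans dist_nonneg (hstep 0)
  have hne : ∃ k, s < t k := (htend.eventually_gt_atTop s).exists
  have hn : s < t (Nat.find hne) := Nat.find_spec hne
  have hnpos : Nat.find hne ≠ 0 := by
    intro h
    rw [h, ht0] at hn; linarith
  obtain ⟨k, hk0⟩ := Nat.exists_eq_succ_of_ne_zero hnpos
  rw [hk0] at hn
  have hk : ¬ s < t k := Nat.find_min hne (by omega)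
  push_neg at hk
  have bdd : BddBelow (Set.range fun n => dist (γ s) (y n)) :=
    ⟨0, by rintro _ ⟨i, rfl⟩; exact dist_nonneg⟩
  have hgap : t (k + 1) - t k ≤ 2 * C + σ := by
    have h1 : dist (γ (t k)) (γ (t (k + 1))) = |t k - t (k + 1)| :=
      hγ _ _ (htnonneg _) (htnonneg _)
    have h2 : dist (γ (t k)) (γ (t (k + 1))) ≤ C + σ + C := by
      calc dist (γ (t k)) (γ (t (k + 1)))
          ≤ dist (γ (t k)) (y k) + dist (y k) (y (k + 1)) + dist (y (k + 1)) (γ (t (k + 1))) :=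
            dist_triangle4 _ _ _ _
        _ ≤ C + σ + C := by
            gcongr
            · exact hclose k
            · exact hstep k
            · rw [dist_comm]; exact hclose (k + 1)
    have habs : |t k - t (k + 1)| = t (k + 1) - t k := by
      rw [abs_sub_comm, abs_of_nonneg]
      linarith [htmono (Nat.le_succ k)]
    rw [h1, habs] at h2
    linarith
  by_cases hcase : s - t k ≤ C + σ / 2
  · have h3 : dist (γ s) (y k) ≤ dist (γ s) (γ (t k)) + dist (γ (t k)) (y k) :=
      dist_triangle _ _ _
    have h4 : dist (γ s) (γ (t k)) = s - t k := by
      rw [hγ s (t k) hs (htnonneg k), abs_of_nonneg (by linarith)]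
    have : dist (γ s) (y k) ≤ 3 * C + σ := by
      rw [h4] at h3; linarith [hclose k]
    exact le_trans (ciInf_le bdd k) this
  · push_neg at hcase
    have h3 : dist (γ s) (y (k + 1)) ≤ dist (γ s) (γ (t (k + 1))) + dist (γ (t (k + 1))) (y (k + 1)) :=
      dist_triangle _ _ _
    have h4 : dist (γ s) (γ (t (k + 1))) = t (k + 1) - s := by
      rw [hγ s (t (k + 1)) hs (htnonneg _), abs_of_nonpos (by linarith)]
      ring
    have : dist (γ s) (y (k + 1)) ≤ 3 * C + σ := by
      rw [h4] at h3; linarith [hclose (k + 1)]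
    exact le_trans (ciInf_le bdd (k + 1)) this
end

section
/- Let (X,d) be a proper metric space (closed balls are compact) and f : X → X a continuous nonexpansive map. Let s > 0, let (r_k)_{k∈ℕ} be a sequence in X with d(r_k, f(r_k)) ≤ s for all k, let n : ℕ → ℕ satisfy n(k) > k for all k, and suppose the set { f^{n(k)}(r_k) : k ∈ ℕ } is contained in a compact subset K of X. Then there exists a backward orbit (w_j)_{j∈ℕ} of f (i.e. f(w_{j+1}) = w_j for all j) with w_0 ∈ K and d(w_j, w_{j+1}) ≤ s for all j ∈ ℕ. -/
theorem backward_orbit_extraction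
    {X : Type*} [MetricSpace X] [ProperSpace X]
    (f : X → X) (hfc : Continuous f)
    (hf : ∀ a b : X, dist (f a) (f b) ≤ dist a b)
    (s : ℝ) (hs : 0 < s)
    (r : ℕ → X) (hr : ∀ k : ℕ, dist (r k) (f (r k)) ≤ s)
    (n : ℕ → ℕ) (hn : ∀ k : ℕ, k < n k)
    (K : Set X) (hK : IsCompact K)
    (hin : ∀ k : ℕ, f^[n k] (r k) ∈ K) :
    ∃ w : ℕ → X, (∀ j : ℕ, f (w (j + 1)) = w j) ∧ w 0 ∈ K ∧
      ∀ j : ℕ, dist (w j) (w (j + 1)) ≤ s := by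
  -- iterates are nonexpansive
  have hiter : ∀ (m : ℕ) (a b : X), dist (f^[m] a) (f^[m] b) ≤ dist a b := by
    intro m
    induction m with
    | zero => simp
    | succ m ih =>
      intro a b
      simp only [Function.iterate_succ_apply]
      exact (ih (f a) (f b)).trans (hf a b)
  -- single step bound
  have hstep : ∀ (k m : ℕ), dist (f^[m] (r k)) (f^[m + 1] (r k)) ≤ s := by
    intro k m
    rw [Function.iterate_succ_apply]
    exact (hiter m (r k) (f (r k))).trans (hr k)
  -- chain bound
  have hchain : ∀ (k a i : ℕ), dist (f^[a] (r k)) (f^[a + i] (r k)) ≤ i * s := by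
    intro k a i
    induction i with
    | zero => simp
    | succ i ih =>
      calc dist (f^[a] (r k)) (f^[a + (i + 1)] (r k))
          ≤ dist (f^[a] (r k)) (f^[a + i] (r k)) + dist (f^[a + i] (r k)) (f^[a + i + 1] (r k)) := by
            rw [← add_assoc]; exact dist_triangle _ _ _
        _ ≤ i * s + s := add_le_add ih (hstep k (a + i))
        _ = (i + 1 : ℕ) * s := by push_cast; ring
  -- the extracted family
  set y : ℕ → ℕ → X := fun k j => f^[n k - j] (r k) with hy
  set C : ℕ → Set X := fun j => Metric.cthickening (j * s) K with hC
  have hmem : ∀ k, y k ∈ Set.pi Set.univ C := by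
    intro k j _
    set i : ℕ := n k - (n k - j) with hi
    have h1 : n k - j + i = n k := by omega
    have h2 : i ≤ j := by omega
    refine Metric.mem_cthickening_of_dist_le _ (f^[n k] (r k)) _ _ (hin k) ?_
    calc dist (f^[n k - j] (r k)) (f^[n k] (r k))
        = dist (f^[n k - j] (r k)) (f^[(n k - j) + i] (r k)) := by rw [h1]
      _ ≤ (i : ℝ) * s := hchain k _ _
      _ ≤ (j : ℝ) * s := by
          apply mul_le_mul_of_nonneg_right _ hs.le
          exact_mod_cast h2
  have hScompact : IsCompact (Set.pi Set.univ C) :=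
    isCompact_univ_pi fun j => hK.cthickening
  obtain ⟨w, hwS, φ, hφ, hlim⟩ := hScompact.tendsto_subseq hmem
  have hlimj : ∀ j, Filter.Tendsto (fun k => y (φ k) j) Filter.atTop (nhds (w j)) := by
    intro j
    exact (continuous_apply j).continuousAt.tendsto.comp hlim
  have hφk : ∀ k, k ≤ φ k := fun k => hφ.le_apply
  refine ⟨w, ?_, ?_, ?_⟩
  · intro j
    have h1 : Filter.Tendsto (fun k => f (y (φ k) (j + 1))) Filter.atTop (nhds (f (w (j + 1)))) :=
      hfc.continuousAt.tendsto.comp (hlimj (j + 1))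
    have h2 : ∀ᶠ k in Filter.atTop, f (y (φ k) (j + 1)) = y (φ k) j := by
      filter_upwards [Filter.eventually_ge_atTop (j + 1)] with k hk
      have hk' : j + 1 ≤ n (φ k) := le_trans (le_trans hk (hφk k)) (hn (φ k)).le
      show f (f^[n (φ k) - (j + 1)] (r (φ k))) = f^[n (φ k) - j] (r (φ k))
      rw [← Function.iterate_succ_apply' f]
      congr 1
      omega
    exact tendsto_nhds_unique (h1.congr' h2) (hlimj j)
  · exact hK.isClosed.mem_of_tendsto (hlimj 0) (Filter.Eventually.of_forall fun k => by
      show f^[n (φ k) - 0] (r (φ k)) ∈ K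
      simpa using hin (φ k))
  · intro j
    have hdist : Filter.Tendsto (fun k => dist (y (φ k) j) (y (φ k) (j + 1))) Filter.atTop
        (nhds (dist (w j) (w (j + 1)))) := (hlimj j).dist (hlimj (j + 1))
    refine le_of_tendsto hdist ?_
    filter_upwards [Filter.eventually_ge_atTop (j + 1)] with k hk
    have hk' : j + 1 ≤ n (φ k) := le_trans (le_trans hk (hφk k)) (hn (φ k)).le
    have : n (φ k) - j = (n (φ k) - (j + 1)) + 1 := by omega
    show dist (f^[n (φ k) - j] (r (φ k))) (f^[n (φ k) - (j + 1)] (r (φ k))) ≤ s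
    rw [this, dist_comm]
    exact hstep (φ k) _
end
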